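/- Let p, n be integers with −1 ≤ n < p. Then there exists a nonzero real polynomial θ of degree at most p on [−1, 1] that is L²(−1,1)-orthogonal to every polynomial of degree at most n and satisfies the equality |θ(−1)|² = ((p−n)(p+n+2)/2) · ∫_{−1}^{1} θ(x)² dx. -/

import Mathlib

/-!
The extremal `θ` is the reproducing kernel at `-1` of the space of polynomials of degree `≤ p`
orthogonal to those of degree `≤ n`: `θ = ∑_{k=n+1}^{p} (P_k(-1) / ‖P_k‖²) P_k` for the Legendre
polynomials `P_k`. By orthogonality, `θ(-1)` and `‖θ‖²` both equal
`∑_{k=n+1}^{p} P_k(-1)² / ‖P_k‖² = ∑_{k=n+1}^{p} (2k+1)/2 = (p-n)(p+n+2)/2`.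
The Legendre data come from Rodrigues' formula: integrating `D^k (x²-1)^k` by parts `k` times
gives the orthogonality and `‖D^k (x²-1)^k‖² = (2k)! ∫_{-1}^{1} (1-x²)^k`, a Wallis integral.
-/

open MeasureTheory Polynomial

section ReproducingKernel

variable {K M ι : Type*} [Field K] [AddCommGroup M] [Module K M]
  (B : M →ₗ[K] M →ₗ[K] K) (ev : M →ₗ[K] K) (s : Finset ι) (φ : ι → M)

def reproducingKernel : M := ∑ k ∈ s, (ev (φ k) / B (φ k) (φ k)) • φ k

theorem apply_reproducingKernel :
    ev (reproducingKernel B ev s φ) = ∑ k ∈ s, ev (φ k) ^ 2 / B (φ k) (φ k) := by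
  simp only [reproducingKernel, map_sum, map_smul, smul_eq_mul]
  exact Finset.sum_congr rfl fun k _ => by ring

-- A term with `B (φ k) (φ k) = 0` is `0` on both sides, since `x / 0 = 0`.
theorem reproducingKernel_apply_self (hφ : (s : Set ι).Pairwise fun i j => B (φ i) (φ j) = 0) :
    B (reproducingKernel B ev s φ) (reproducingKernel B ev s φ) =
      ∑ k ∈ s, ev (φ k) ^ 2 / B (φ k) (φ k) := by
  simp only [reproducingKernel, map_sum, map_smul, LinearMap.sum_apply, LinearMap.smul_apply,
    smul_eq_mul]
  refine Finset.sum_congr rfl fun j hj => ?_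
  rw [Finset.sum_eq_single_of_mem j hj fun k hk hkj => by simp [hφ hk hj hkj]]
  rcases eq_or_ne (B (φ j) (φ j)) 0 with h | h
  · simp [h]
  · field_simp

theorem reproducingKernel_orthogonal {m : M} (hm : ∀ k ∈ s, B (φ k) m = 0) :
    B (reproducingKernel B ev s φ) m = 0 := by
  simp only [reproducingKernel, map_sum, map_smul, LinearMap.sum_apply, LinearMap.smul_apply]
  exact Finset.sum_eq_zero fun k hk => by rw [hm k hk, smul_zero]

end ReproducingKernel

theorem Finset.sum_Ico_two_mul_add_one {N M : ℕ} (h : N ≤ M) :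
    ∑ k ∈ Finset.Ico N M, (2 * k + 1 : ℝ) = M ^ 2 - N ^ 2 := by
  induction M, h using Nat.le_induction with
  | base => simp
  | succ M hNM ih =>
    rw [Finset.sum_Ico_succ_top hNM, ih]
    push_cast
    ring

theorem integral_one_sub_sq_pow_succ (k : ℕ) :
    (2 * k + 3 : ℝ) * ∫ x in (-1 : ℝ)..1, (1 - x ^ 2) ^ (k + 1) =
      (2 * k + 2 : ℝ) * ∫ x in (-1 : ℝ)..1, (1 - x ^ 2) ^ k := by
  have hderiv : ∀ x : ℝ, HasDerivAt (fun x => x * (1 - x ^ 2) ^ (k + 1))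
      ((2 * k + 3) * (1 - x ^ 2) ^ (k + 1) - (2 * k + 2) * (1 - x ^ 2) ^ k) x := by
    intro x
    refine ((hasDerivAt_id x).mul
      (((hasDerivAt_pow 2 x).const_sub 1).pow (k + 1))).congr_deriv ?_
    simp only [id, Pi.pow_apply, Nat.add_sub_cancel, pow_succ (1 - x ^ 2) k]
    push_cast
    ring
  have hint : ∀ j : ℕ, IntervalIntegrable (fun x : ℝ => (1 - x ^ 2) ^ j) volume (-1) 1 :=
    fun j => Continuous.intervalIntegrable (by fun_prop) _ _
  have hzero := intervalIntegral.integral_eq_sub_of_hasDerivAt (fun x _ => hderiv x)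
    (((hint (k + 1)).const_mul _).sub ((hint k).const_mul _))
  rw [intervalIntegral.integral_sub ((hint (k + 1)).const_mul _) ((hint k).const_mul _),
    intervalIntegral.integral_const_mul, intervalIntegral.integral_const_mul] at hzero
  norm_num at hzero
  linarith

theorem factorial_mul_integral_one_sub_sq_pow (k : ℕ) :
    ((2 * k + 1).factorial : ℝ) * ∫ x in (-1 : ℝ)..1, (1 - x ^ 2) ^ k =
      2 * 4 ^ k * k.factorial ^ 2 := by
  induction k with
  | zero => norm_num
  | succ k ih =>
    rw [show 2 * (k + 1) + 1 = 2 * k + 1 + 1 + 1 by ring, Nat.factorial_succ, Nat.factorial_succ,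
      Nat.factorial_succ k]
    push_cast
    linear_combination (2 * (k : ℝ) + 2) * ((2 * k + 1).factorial : ℝ) *
      integral_one_sub_sq_pow_succ k + (2 * (k : ℝ) + 2) ^ 2 * ih

namespace Polynomial

section IterateDerivative

variable {R : Type*} [CommRing R]

theorem eval_iterate_derivative_pow_eq_zero {p : R[X]} {t : R} (ht : p.eval t = 0)
    {j k : ℕ} (hjk : j < k) : (derivative^[j] (p ^ k)).eval t = 0 := by
  obtain ⟨q, hq⟩ := pow_sub_dvd_iterate_derivative_pow p k j
  rw [hq, eval_mul, eval_pow, ht, zero_pow (Nat.sub_ne_zero_of_lt hjk), zero_mul]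

theorem eval_iterate_derivative_X_sub_C_pow_mul (k : ℕ) (t : R) (q : R[X]) :
    (derivative^[k] ((X - C t) ^ k * q)).eval t = k.factorial * q.eval t := by
  rw [iterate_derivative_mul, eval_finsetSum,
    Finset.sum_eq_single_of_mem 0 (Finset.mem_range.mpr k.succ_pos)]
  · simp [iterate_derivative_X_sub_pow_self]
  · intro i hi hi0
    rw [iterate_derivative_X_sub_pow, eval_smul, eval_mul, eval_smul, eval_pow,
      Nat.sub_sub_self (Finset.mem_range_succ_iff.mp hi), eval_sub, eval_X, eval_C, sub_self,
      zero_pow hi0, smul_zero, zero_mul, smul_zero]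

theorem Monic.iterate_derivative_natDegree {p : R[X]} (hp : p.Monic) :
    derivative^[p.natDegree] p = C (p.natDegree.factorial : R) := by
  have hdeg : (derivative^[p.natDegree] p).natDegree = 0 := by
    simpa using natDegree_iterate_derivative p p.natDegree
  rw [eq_C_of_natDegree_eq_zero hdeg, coeff_iterate_derivative, zero_add, hp.coeff_natDegree,
    Nat.descFactorial_self, nsmul_one]

end IterateDerivative

section Rodrigues

variable (R : Type*) [CommRing R]

-- `rodrigues R k = 2^k k! P_k`, with `P_k` the Legendre polynomial normalised by `P_k(1) = 1`.
noncomputable def rodrigues (k : ℕ) : R[X] := derivative^[k] ((X ^ 2 - 1) ^ k)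

theorem natDegree_rodrigues_le (k : ℕ) : (rodrigues R k).natDegree ≤ k := by
  have h : ((X ^ 2 - 1 : R[X]) ^ k).natDegree ≤ 2 * k := by
    refine natDegree_pow_le_of_le k ?_ |>.trans (by rw [mul_comm])
    compute_degree
  exact (natDegree_iterate_derivative _ k).trans (by omega)

theorem eval_neg_one_rodrigues (k : ℕ) :
    (rodrigues R k).eval (-1) = (-2) ^ k * k.factorial := by
  have h : (X ^ 2 - 1 : R[X]) ^ k = (X - C (-1)) ^ k * (X - 1) ^ k := by
    rw [← mul_pow, C_neg, C_1]
    ring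
  rw [rodrigues, h, eval_iterate_derivative_X_sub_C_pow_mul]
  simp only [eval_pow, eval_sub, eval_X, eval_one]
  ring

end Rodrigues

noncomputable def l2Pairing (a b : ℝ) : ℝ[X] →ₗ[ℝ] ℝ[X] →ₗ[ℝ] ℝ :=
  LinearMap.mk₂ ℝ (fun f g => ∫ x in a..b, f.eval x * g.eval x)
    (fun f₁ f₂ g => by
      simp only [eval_add, add_mul]
      exact intervalIntegral.integral_add (Continuous.intervalIntegrable (by fun_prop) _ _)
        (Continuous.intervalIntegrable (by fun_prop) _ _))
    (fun c f g => by
      simp only [eval_smul, smul_eq_mul, mul_assoc, intervalIntegral.integral_const_mul])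
    (fun f g₁ g₂ => by
      simp only [eval_add, mul_add]
      exact intervalIntegral.integral_add (Continuous.intervalIntegrable (by fun_prop) _ _)
        (Continuous.intervalIntegrable (by fun_prop) _ _))
    (fun c f g => by
      simp only [eval_smul, smul_eq_mul, mul_left_comm, intervalIntegral.integral_const_mul])

@[simp]
theorem l2Pairing_apply (a b : ℝ) (f g : ℝ[X]) :
    l2Pairing a b f g = ∫ x in a..b, f.eval x * g.eval x := rfl

theorem l2Pairing_comm (a b : ℝ) (f g : ℝ[X]) : l2Pairing a b f g = l2Pairing a b g f := by
  simp only [l2Pairing_apply, mul_comm]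

theorem l2Pairing_derivative_left (a b : ℝ) (f g : ℝ[X]) :
    l2Pairing a b (derivative f) g =
      f.eval b * g.eval b - f.eval a * g.eval a - l2Pairing a b f (derivative g) := by
  have := intervalIntegral.integral_mul_deriv_eq_deriv_mul (fun x _ => f.hasDerivAt x)
    (fun x _ => g.hasDerivAt x) (Continuous.intervalIntegrable (by fun_prop) a b)
    (Continuous.intervalIntegrable (by fun_prop) a b)
  simp only [l2Pairing_apply]
  linarith

theorem l2Pairing_iterate_derivative_left {a b : ℝ} {f : ℝ[X]} {j : ℕ}
    (hf : ∀ i < j, (derivative^[i] f).eval a = 0 ∧ (derivative^[i] f).eval b = 0) (g : ℝ[X]) :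
    l2Pairing a b (derivative^[j] f) g = (-1) ^ j * l2Pairing a b f (derivative^[j] g) := by
  induction j generalizing g with
  | zero => simp
  | succ j ih =>
    rw [Function.iterate_succ_apply', l2Pairing_derivative_left, (hf j j.lt_succ_self).1,
      (hf j j.lt_succ_self).2, ih (fun i hi => hf i (by omega)), ← Function.iterate_succ_apply]
    ring

theorem l2Pairing_rodrigues_left (k : ℕ) (q : ℝ[X]) :
    l2Pairing (-1) 1 (rodrigues ℝ k) q =
      (-1) ^ k * l2Pairing (-1) 1 ((X ^ 2 - 1) ^ k) (derivative^[k] q) := by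
  have hroot : ∀ t : ℝ, t = -1 ∨ t = 1 → (X ^ 2 - 1 : ℝ[X]).eval t = 0 := by
    rintro t (rfl | rfl) <;> norm_num
  exact l2Pairing_iterate_derivative_left (fun i hi =>
    ⟨eval_iterate_derivative_pow_eq_zero (hroot _ (.inl rfl)) hi,
      eval_iterate_derivative_pow_eq_zero (hroot _ (.inr rfl)) hi⟩) q

theorem l2Pairing_rodrigues_of_natDegree_lt {k : ℕ} {q : ℝ[X]} (hq : q.natDegree < k) :
    l2Pairing (-1) 1 (rodrigues ℝ k) q = 0 := by
  rw [l2Pairing_rodrigues_left, iterate_derivative_eq_zero hq, map_zero, mul_zero]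

theorem l2Pairing_rodrigues_rodrigues_of_ne {j k : ℕ} (hjk : j ≠ k) :
    l2Pairing (-1) 1 (rodrigues ℝ j) (rodrigues ℝ k) = 0 := by
  rcases hjk.lt_or_gt with h | h
  · rw [l2Pairing_comm]
    exact l2Pairing_rodrigues_of_natDegree_lt ((natDegree_rodrigues_le ℝ j).trans_lt h)
  · exact l2Pairing_rodrigues_of_natDegree_lt ((natDegree_rodrigues_le ℝ k).trans_lt h)

theorem l2Pairing_rodrigues_self (k : ℕ) :
    l2Pairing (-1) 1 (rodrigues ℝ k) (rodrigues ℝ k) =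
      (2 * k).factorial * ∫ x in (-1 : ℝ)..1, (1 - x ^ 2) ^ k := by
  have hmonic : (X ^ 2 - 1 : ℝ[X]).Monic := by monicity!
  have hdeg : ((X ^ 2 - 1 : ℝ[X]) ^ k).natDegree = 2 * k := by
    rw [hmonic.natDegree_pow, show (X ^ 2 - 1 : ℝ[X]).natDegree = 2 by compute_degree!,
      mul_comm]
  have htop : derivative^[k] (rodrigues ℝ k) = C ((2 * k).factorial : ℝ) := by
    rw [rodrigues, ← Function.iterate_add_apply, ← two_mul, ← hdeg,
      (hmonic.pow k).iterate_derivative_natDegree]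
  rw [l2Pairing_rodrigues_left, htop, l2Pairing_apply, ← intervalIntegral.integral_const_mul,
    ← intervalIntegral.integral_const_mul]
  refine intervalIntegral.integral_congr fun x _ => ?_
  simp only [eval_C, eval_pow, eval_sub, eval_X, eval_one]
  rw [show 1 - x ^ 2 = -(x ^ 2 - 1) by ring, neg_pow (x ^ 2 - 1)]
  ring

theorem eval_neg_one_rodrigues_sq_div_l2Pairing_self (k : ℕ) :
    (rodrigues ℝ k).eval (-1) ^ 2 / l2Pairing (-1) 1 (rodrigues ℝ k) (rodrigues ℝ k) =
      (2 * k + 1) / 2 := by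
  have hJ := factorial_mul_integral_one_sub_sq_pow k
  rw [Nat.factorial_succ] at hJ
  push_cast at hJ
  have hJ' : ∫ x in (-1 : ℝ)..1, (1 - x ^ 2) ^ k =
      2 * 4 ^ k * (k.factorial : ℝ) ^ 2 / ((2 * k + 1) * (2 * k).factorial) :=
    eq_div_of_mul_eq (by positivity) (by linear_combination hJ)
  rw [eval_neg_one_rodrigues, l2Pairing_rodrigues_self, hJ', mul_pow, ← pow_mul,
    mul_comm k 2, pow_mul]
  field_simp
  norm_num

theorem sum_Ico_eval_neg_one_rodrigues_sq_div_l2Pairing_self {N M : ℕ} (h : N ≤ M) :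
    ∑ k ∈ Finset.Ico N M,
        (rodrigues ℝ k).eval (-1) ^ 2 / l2Pairing (-1) 1 (rodrigues ℝ k) (rodrigues ℝ k) =
      ((M : ℝ) ^ 2 - N ^ 2) / 2 := by
  rw [Finset.sum_congr rfl fun k _ => eval_neg_one_rodrigues_sq_div_l2Pairing_self k,
    ← Finset.sum_div, Finset.sum_Ico_two_mul_add_one h]

end Polynomial

/-- **Sharpness of the one-dimensional inverse trace inequality.**  For integers
`-1 ≤ n < p` there exists a nonzero real polynomial `θ` of degree at most `p`,
`L²(-1,1)`-orthogonal to every polynomial of degree at most `n` (vacuous when `n = -1`),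
such that `|θ(-1)|² = ((p-n)(p+n+2)/2) ⬝ ∫_{-1}^{1} θ(x)² dx`. -/
theorem endpoint_bound_orthogonal_polynomial_sharp
    (p n : ℤ) (hn : -1 ≤ n) (hnp : n < p) :
    ∃ θ : Polynomial ℝ, θ ≠ 0 ∧ (θ.natDegree : ℤ) ≤ p ∧
      (∀ q : Polynomial ℝ, (q.natDegree : ℤ) ≤ n →
        ∫ x in (-1 : ℝ)..1, θ.eval x * q.eval x = 0) ∧
      (θ.eval (-1)) ^ 2 =
        (((p - n) * (p + n + 2) : ℤ) : ℝ) / 2 *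
          ∫ x in (-1 : ℝ)..1, (θ.eval x) ^ 2 := by
  obtain ⟨N, rfl⟩ : ∃ N : ℕ, n = N - 1 := ⟨(n + 1).toNat, by omega⟩
  obtain ⟨P, rfl⟩ : ∃ P : ℕ, p = P := ⟨p.toNat, by omega⟩
  have hNP : N ≤ P + 1 := by omega
  set s := Finset.Ico N (P + 1)
  set θ := reproducingKernel (l2Pairing (-1) 1) (leval (-1)) s (rodrigues ℝ)
  have hsum := sum_Ico_eval_neg_one_rodrigues_sq_div_l2Pairing_self hNP
  have heval : θ.eval (-1) = (((P + 1 : ℕ) : ℝ) ^ 2 - N ^ 2) / 2 :=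
    (apply_reproducingKernel (l2Pairing (-1) 1) (leval (-1)) s (rodrigues ℝ)).trans hsum
  have hnorm : ∫ x in (-1 : ℝ)..1, (θ.eval x) ^ 2 = (((P + 1 : ℕ) : ℝ) ^ 2 - N ^ 2) / 2 :=
    calc ∫ x in (-1 : ℝ)..1, (θ.eval x) ^ 2 = l2Pairing (-1) 1 θ θ := by
          simp only [l2Pairing_apply, sq]
      _ = _ := (reproducingKernel_apply_self _ _ _ _
          fun i _ j _ hij => l2Pairing_rodrigues_rodrigues_of_ne hij).trans hsum
  refine ⟨θ, fun hθ => ?_, ?_, fun q hq => ?_, ?_⟩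
  · have hlt : (N : ℝ) < (P + 1 : ℕ) := by exact_mod_cast (by omega : N < P + 1)
    rw [hθ, eval_zero] at heval
    nlinarith
  · refine Int.ofNat_le.mpr (natDegree_sum_le_of_forall_le _ _ fun k hk => ?_)
    exact (natDegree_smul_le _ _).trans
      ((natDegree_rodrigues_le ℝ k).trans (Nat.le_of_lt_succ (Finset.mem_Ico.mp hk).2))
  · refine reproducingKernel_orthogonal (l2Pairing (-1) 1) (leval (-1)) s (rodrigues ℝ)
      fun k hk => l2Pairing_rodrigues_of_natDegree_lt ?_
    have := (Finset.mem_Ico.mp hk).1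
    omega
  · rw [heval, hnorm]
    push_cast
    ring
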